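/- Let Y = exp(−x)(y∂_x + (y²/2 + ε)∂_y) in V(ℂ²) with ε ∈ ℂ, and let V = exp(dx)∂_y for d ∈ ℂ. Then [V,[Y,V]] = (2d−1)exp((2d−1)x)∂_y; in particular [V,[Y,V]] = 0 if and only if d = 1/2. Moreover, for d = 1/2 one has (ad Y)²(V) = exp(−3x/2)·ε(1/2 − 2)·∂_y, so (ad Y)²(V) = 0 if and only if ε = 0. -/

import Mathlib

open Complex Module Set

set_option synthInstance.maxHeartbeats 1000000
set_option maxHeartbeats 1000000

noncomputable section

/-- The algebra of entire (holomorphic) functions on `ℂ²`. -/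
def Entire : Subalgebra ℂ (ℂ × ℂ → ℂ) where
  carrier := {f | AnalyticOnNhd ℂ f Set.univ}
  mul_mem' hf hg := hf.mul hg
  add_mem' hf hg := hf.add hg
  one_mem' := analyticOnNhd_const
  zero_mem' := analyticOnNhd_const
  algebraMap_mem' _ := analyticOnNhd_const

/-- The Lie algebra `V(ℂ²)` of holomorphic vector fields on `ℂ²`, i.e. derivations
`F(x,y)∂ₓ + G(x,y)∂_y` of the ℂ-algebra of entire functions on `ℂ²`, with bracket the
commutator of derivations. -/
abbrev VF := Derivation ℂ Entire Entire

instance (M : Submodule ℂ VF) : AddCommGroup ↥M := @Submodule.addCommGroup ℂ VF _ _ _ M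

/- Shortcut instances, to speed up elaboration. -/
@[reducible] instance (priority := 10000) : AddCommMonoid Entire := inferInstance
instance (priority := 10000) : SMulCommClass ℂ Entire Entire := inferInstance
@[reducible] instance (priority := 10000) : SMul Entire VF := inferInstance
@[reducible] instance (priority := 10000) : SMul ℂ VF := inferInstance
@[reducible] instance (priority := 10000) : LieRing VF := inferInstance
@[reducible] instance (priority := 10000) : AddCommGroup VF := inferInstance

theorem Entire.diffAt (f : Entire) (p : ℂ × ℂ) : DifferentiableAt ℂ (f : ℂ × ℂ → ℂ) p :=
  (f.2 p trivial).differentiableAt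

theorem Entire.fderiv_mem {f : ℂ × ℂ → ℂ} (hf : f ∈ Entire) (v : ℂ × ℂ) :
    (fun p => fderiv ℂ f p v) ∈ Entire := fun p _ =>
  ((ContinuousLinearMap.apply ℂ ℂ v).analyticAt _).comp ((hf.fderiv) p trivial)

/-- The constant-coefficient vector field in the direction `v`. -/
def Dvec (v : ℂ × ℂ) : VF where
  toFun f := ⟨fun p => fderiv ℂ (f : ℂ × ℂ → ℂ) p v, Entire.fderiv_mem f.2 v⟩
  map_add' f g := Subtype.ext <| funext fun p => by
    show fderiv ℂ ((f : ℂ × ℂ → ℂ) + (g : ℂ × ℂ → ℂ)) p v = _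
    rw [fderiv_add (Entire.diffAt f p) (Entire.diffAt g p)]
    rfl
  map_smul' c f := Subtype.ext <| funext fun p => by
    show fderiv ℂ (c • (f : ℂ × ℂ → ℂ)) p v = _
    rw [fderiv_const_smul (Entire.diffAt f p) c]
    rfl
  map_one_eq_zero' := Subtype.ext <| funext fun p => by
    show fderiv ℂ (fun _ => (1 : ℂ)) p v = 0
    rw [fderiv_const_apply]
    rfl
  leibniz' f g := Subtype.ext <| funext fun p => by
    show fderiv ℂ (fun q => (f : ℂ × ℂ → ℂ) q * (g : ℂ × ℂ → ℂ) q) p v = _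
    rw [fderiv_fun_mul (Entire.diffAt f p) (Entire.diffAt g p)]
    show (f : ℂ × ℂ → ℂ) p • fderiv ℂ (g : ℂ × ℂ → ℂ) p v
      + (g : ℂ × ℂ → ℂ) p • fderiv ℂ (f : ℂ × ℂ → ℂ) p v = _
    rfl

/-- The coordinate vector field `∂ₓ`. -/
def Dx : VF := Dvec (1, 0)

/-- The coordinate vector field `∂_y`. -/
def Dy : VF := Dvec (0, 1)

/-- The entire function `exp (c·x)`. -/
def ex (c : ℂ) : Entire :=
  ⟨fun p => Complex.exp (c * p.1), fun p _ =>
    analyticAt_cexp.comp ((analyticAt_const (v := c)).mul (analyticAt_fst (p := p)))⟩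

/-- The entire function `y` (the second coordinate). -/
def yc : Entire := ⟨fun p => p.2, fun _ _ => analyticAt_snd⟩

/-- The entire function `f(y)` built from an entire function `f` of one variable. -/
def ofY (f : ℂ → ℂ) (hf : AnalyticOnNhd ℂ f Set.univ) : Entire :=
  ⟨fun p => f p.2, fun p _ => (hf p.2 trivial).comp analyticAt_snd⟩

/-- `X = exp(x)∂_y`, the first generator of the type (II) realization of `sl(2,ℂ)`. -/
def Xb : VF := ex 1 • Dy

/-- `Y = exp(−x)(y∂ₓ + (y²/2 + ε)∂_y)`, the second generator of the type (II)_ε realization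
of `sl(2,ℂ)`. -/
def Yb (ε : ℂ) : VF :=
  (ex (-1) * yc) • Dx + (ex (-1) * (((1 : ℂ) / 2) • yc ^ 2 + algebraMap ℂ Entire ε)) • Dy

/-- The type (II)_ε realization of `sl(2,ℂ)` in `V(ℂ²)`: the span of `X = exp(x)∂_y`,
`Y = exp(−x)(y∂ₓ + (y²/2 + ε)∂_y)` and `H = [X,Y]`. -/
def typeII (ε : ℂ) : LieSubalgebra ℂ VF := LieSubalgebra.lieSpan ℂ VF {Xb, Yb ε, ⁅Xb, Yb ε⁆}

/-- `H = [X,Y]` for the type (II)_ε realization. -/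
def Hb (ε : ℂ) : VF := ⁅Xb, Yb ε⁆

/-- The vector field `W = ∂ₓ + y∂_y`. -/
def Wvf : VF := Dx + yc • Dy

/-- The vector field `exp(dx)(∂ₓ + y∂_y)`. -/
def Vvf (d : ℂ) : VF := ex d • (Dx + yc • Dy)

/-- The vector field `exp(dx)∂_y`. -/
def Evf (d : ℂ) : VF := ex d • Dy

/-- The vector field `exp(dx)(∂ₓ + (y + ℓ)∂_y)`. -/
def Vlvf (d l : ℂ) : VF := ex d • (Dx + (yc + algebraMap ℂ Entire l) • Dy)

/-!
Writing vector fields as `a ∂ₓ + b ∂_y`, the bracket is given by the classical coefficient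
formula because `∂ₓ` and `∂_y` commute (symmetry of second derivatives). Both brackets in the
statement then reduce to identities between functions of the form `exp(cx)·p(y)`, checked
pointwise. A field `c • exp(dx)∂_y` vanishes only if `c = 0`, as one sees by applying it to `y`
at the origin.
-/

section DerivationSmul

variable {R A : Type*} [CommRing R] [CommRing A] [Algebra R A]

theorem Derivation.smul_lie (a : A) (D₁ D₂ : Derivation R A A) :
    ⁅a • D₁, D₂⁆ = a • ⁅D₁, D₂⁆ - D₂ a • D₁ := by
  ext f
  simp only [Derivation.commutator_apply, Derivation.sub_apply, Derivation.smul_apply,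
    Derivation.leibniz, smul_eq_mul]
  ring

theorem Derivation.lie_smul (a : A) (D₁ D₂ : Derivation R A A) :
    ⁅D₁, a • D₂⁆ = a • ⁅D₁, D₂⁆ + D₁ a • D₂ := by
  ext f
  simp only [Derivation.commutator_apply, Derivation.add_apply, Derivation.smul_apply,
    Derivation.leibniz, smul_eq_mul]
  ring

theorem Derivation.smul_lie_smul (a b : A) (D₁ D₂ : Derivation R A A) (h : ⁅D₁, D₂⁆ = 0) :
    ⁅a • D₁, b • D₂⁆ = (a * D₁ b) • D₂ - (b * D₂ a) • D₁ := by
  rw [Derivation.lie_smul, Derivation.smul_lie, h, smul_zero, zero_sub, smul_neg, smul_smul,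
    Derivation.smul_apply, smul_eq_mul]
  abel

end DerivationSmul

@[ext]
theorem Entire.ext {f g : Entire} (h : ∀ p, (f : ℂ × ℂ → ℂ) p = (g : ℂ × ℂ → ℂ) p) : f = g :=
  Subtype.ext (funext h)

@[simp]
theorem ex_apply (c : ℂ) (p : ℂ × ℂ) : (ex c : ℂ × ℂ → ℂ) p = exp (c * p.1) := rfl

@[simp]
theorem yc_apply (p : ℂ × ℂ) : (yc : ℂ × ℂ → ℂ) p = p.2 := rfl

theorem ex_add (a b : ℂ) : ex (a + b) = ex a * ex b := by
  ext p
  simp [add_mul, exp_add]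

theorem Dvec_lie_Dvec (v w : ℂ × ℂ) : ⁅Dvec v, Dvec w⁆ = 0 := by
  ext f p
  have hf : AnalyticOnNhd ℂ (f : ℂ × ℂ → ℂ) univ := f.2
  have hf' : DifferentiableAt ℂ (fderiv ℂ (f : ℂ × ℂ → ℂ)) p :=
    (hf.fderiv p trivial).differentiableAt
  have fderiv_fderiv_apply (u u' : ℂ × ℂ) :
      fderiv ℂ (fun q => fderiv ℂ (f : ℂ × ℂ → ℂ) q u) p u'
        = fderiv ℂ (fderiv ℂ (f : ℂ × ℂ → ℂ)) p u' u := by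
    rw [fderiv_clm_apply hf' (differentiableAt_const u)]
    simp
  rw [Derivation.commutator_apply]
  show fderiv ℂ (fun q => fderiv ℂ (f : ℂ × ℂ → ℂ) q w) p v
      - fderiv ℂ (fun q => fderiv ℂ (f : ℂ × ℂ → ℂ) q v) p w = 0
  rw [fderiv_fderiv_apply, fderiv_fderiv_apply, sub_eq_zero]
  exact second_derivative_symmetric (fun q => (Entire.diffAt f q).hasFDerivAt)
    hf'.hasFDerivAt v w

theorem Dvec_ex (v : ℂ × ℂ) (c : ℂ) : Dvec v (ex c) = (c * v.1) • ex c := by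
  ext p
  have h := ((hasFDerivAt_fst (𝕜 := ℂ) (E := ℂ) (F := ℂ) (p := p)).const_mul c).cexp
  change fderiv ℂ (fun q : ℂ × ℂ => exp (c * q.1)) p v = _
  rw [h.fderiv]
  simp [mul_comm]

theorem Dvec_yc (v : ℂ × ℂ) : Dvec v yc = algebraMap ℂ Entire v.2 := by
  ext p
  exact congrArg (· v) (hasFDerivAt_snd (𝕜 := ℂ) (E := ℂ) (F := ℂ) (p := p)).fderiv

@[simp] theorem Dx_ex (c : ℂ) : Dx (ex c) = c • ex c := by simp [Dx, Dvec_ex]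
@[simp] theorem Dy_ex (c : ℂ) : Dy (ex c) = 0 := by simp [Dy, Dvec_ex]
@[simp] theorem Dx_yc : Dx yc = 0 := by simp [Dx, Dvec_yc]
@[simp] theorem Dy_yc : Dy yc = 1 := by simp [Dy, Dvec_yc]

theorem lie_smul_Dx_add_smul_Dy (a b c e : Entire) :
    ⁅a • Dx + b • Dy, c • Dx + e • Dy⁆
      = (a * Dx c + b * Dy c - c * Dx a - e * Dy a) • Dx
        + (a * Dx e + b * Dy e - c * Dx b - e * Dy b) • Dy := by
  simp only [add_lie, lie_add, Derivation.smul_lie_smul _ _ _ _ (Dvec_lie_Dvec _ _), Dx, Dy,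
    sub_smul, add_smul]
  abel

theorem Evf_eq (d : ℂ) : Evf d = (0 : Entire) • Dx + ex d • Dy := by
  rw [Evf, zero_smul, zero_add]

theorem Yb_lie_Evf (ε d : ℂ) :
    ⁅Yb ε, Evf d⁆ = (-(ex (-1) * ex d)) • Dx + ((d - 1) • (ex (-1) * ex d * yc)) • Dy := by
  rw [Yb, Evf_eq, lie_smul_Dx_add_smul_Dy]
  congr 2 <;> ext p <;> simp [sq] <;> ring

theorem smul_Evf_eq (c d : ℂ) : c • Evf d = (0 : Entire) • Dx + (c • ex d) • Dy := by
  rw [Evf_eq, smul_add, ← smul_assoc, ← smul_assoc, smul_zero]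

theorem Evf_lie_Yb_lie_Evf (ε d : ℂ) :
    ⁅Evf d, ⁅Yb ε, Evf d⁆⁆ = (2 * d - 1) • Evf (2 * d - 1) := by
  have hex : ex (2 * d - 1) = ex d * ex d * ex (-1) := by
    rw [← ex_add, ← ex_add]
    congr 1
    ring
  rw [Yb_lie_Evf, Evf_eq, lie_smul_Dx_add_smul_Dy, smul_Evf_eq, hex]
  congr 2
  · ext p
    simp
  · ext p
    simp
    ring

theorem Yb_lie_Yb_lie_Evf_half (ε : ℂ) :
    ⁅Yb ε, ⁅Yb ε, Evf (1 / 2)⁆⁆ = (ε * (1 / 2 - 2)) • Evf (-3 / 2) := by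
  have hex : ex (-3 / 2) = ex (-1) * ex (-1) * ex (1 / 2) := by
    rw [← ex_add, ← ex_add]
    norm_num
  rw [Yb_lie_Evf, Yb, lie_smul_Dx_add_smul_Dy, smul_Evf_eq, hex]
  congr 2 <;> ext p <;> simp [sq] <;> ring

theorem smul_Evf_eq_zero_iff {c d : ℂ} : c • Evf d = 0 ↔ c = 0 := by
  refine ⟨fun h => ?_, fun h => by rw [h, zero_smul]⟩
  have h0 := congrArg (fun D : VF => (D yc : ℂ × ℂ → ℂ) 0) h
  simpa [Evf] using h0

/-- For `Y = exp(−x)(y∂ₓ + (y²/2 + ε)∂_y)` and `V = exp(dx)∂_y` one has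
`[V,[Y,V]] = (2d−1)exp((2d−1)x)∂_y`, which vanishes iff `d = 1/2`; and for `d = 1/2`,
`(ad Y)²(V) = exp(−3x/2)·ε(1/2 − 2)·∂_y`, which vanishes iff `ε = 0`. -/
theorem statement_9 (ε d : ℂ) :
    ⁅Evf d, ⁅Yb ε, Evf d⁆⁆ = (2 * d - 1) • Evf (2 * d - 1) ∧
    (⁅Evf d, ⁅Yb ε, Evf d⁆⁆ = 0 ↔ d = 1 / 2) ∧
    (d = 1 / 2 →
      ⁅Yb ε, ⁅Yb ε, Evf d⁆⁆ = (ε * (1 / 2 - 2)) • Evf (-(3 : ℂ) / 2) ∧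
      (⁅Yb ε, ⁅Yb ε, Evf d⁆⁆ = 0 ↔ ε = 0)) := by
  refine ⟨Evf_lie_Yb_lie_Evf ε d, ?_, fun hd => ?_⟩
  · rw [Evf_lie_Yb_lie_Evf, smul_Evf_eq_zero_iff]
    exact ⟨fun h => by linear_combination h / 2, fun h => by linear_combination 2 * h⟩
  · subst hd
    refine ⟨Yb_lie_Yb_lie_Evf_half ε, ?_⟩
    rw [Yb_lie_Yb_lie_Evf_half, smul_Evf_eq_zero_iff]
    norm_num
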